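/- Let n ≥ 1 and let 𝔤₁ be the (n+2)-dimensional metric Lie algebra with orthonormal basis {W, X₁, …, X_{n+1}} and brackets [W,X_k] = X_{k+1} for k = 1, …, n, all other basis brackets zero, and set 𝔳 = span{X₂, …, X_{n+1}}. Suppose J : 𝔤₁ → 𝔤₁ is a linear isometry with J ∘ J = −id, J(W) = X₁ and J(𝔳) ⊆ 𝔳. Then the Nijenhuis expression N_J(W, X_{n+1}) = [W, X_{n+1}] + J[J W, X_{n+1}] + J[W, J X_{n+1}] − [J W, J X_{n+1}] is nonzero; in fact N_J(W, X_{n+1}) = J[W, J X_{n+1}] ≠ 0. -/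

import Mathlib

open RealInnerProductSpace

set_option maxHeartbeats 1000000

lemma esum_apply {ι κ : Type*} [Fintype ι] (s : Finset κ) (f : κ → EuclideanSpace ℝ ι) (j : ι) :
    (∑ k ∈ s, f k) j = ∑ k ∈ s, f k j :=
  by rw [WithLp.ofLp_sum, Finset.sum_apply]

lemma econgr {m : ℕ} {x y : EuclideanSpace ℝ (Fin m)} (h : x = y) (j : Fin m) : x j = y j := by
  rw [h]

lemma esum_repr {m : ℕ} (v : EuclideanSpace ℝ (Fin m)) :
    v = ∑ i, v i • EuclideanSpace.single i 1 := by
  ext j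
  rw [esum_apply]
  simp [EuclideanSpace.single_apply]

/-- If the bracket of `e 0` with `v` vanishes, then the coordinates `1, …, n` of `v` vanish. -/
lemma ex61_coord_vanish (n : ℕ)
    (e : Fin (n + 2) → EuclideanSpace ℝ (Fin (n + 2)))
    (he : ∀ i, e i = EuclideanSpace.single i 1)
    (br : EuclideanSpace ℝ (Fin (n + 2)) →ₗ[ℝ] EuclideanSpace ℝ (Fin (n + 2)) →ₗ[ℝ]
      EuclideanSpace ℝ (Fin (n + 2)))
    (halt : ∀ x, br x x = 0)
    (hbr1 : ∀ (k : ℕ) (h1 : 1 ≤ k) (h2 : k ≤ n),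
      br (e 0) (e ⟨k, Nat.lt_succ_of_le (Nat.le_succ_of_le h2)⟩) = e ⟨k + 1, Nat.succ_lt_succ (Nat.lt_succ_of_le h2)⟩)
    (hbr2 : br (e 0) (e ⟨n + 1, Nat.lt_succ_self _⟩) = 0)
    (v : EuclideanSpace ℝ (Fin (n + 2)))
    (hbr0' : (∑ i, v i • br (e 0) (e i)) = 0)
    (k : ℕ) (hk : k < n + 2) (hk1 : 1 ≤ k) (hk2 : k ≤ n) : v ⟨k, hk⟩ = 0 := by
  have h : ∑ i, (v i • br (e 0) (e i)) (⟨k + 1, by omega⟩ : Fin (n + 2)) = 0 := by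
    rw [← esum_apply, hbr0']
    rfl
  rw [Finset.sum_eq_single_of_mem (⟨k, by omega⟩ : Fin (n + 2)) (Finset.mem_univ _)] at h
  · have hb : br (e 0) (e ⟨k, by omega⟩) = e ⟨k + 1, by omega⟩ := hbr1 k hk1 hk2
    rw [hb, he] at h
    simpa [EuclideanSpace.single_apply] using h
  · intro i _ hne
    rcases Nat.lt_or_ge (i : ℕ) 1 with hi | hi
    · have : i = 0 := by apply Fin.ext; show (i : ℕ) = 0; omega
      subst this
      rw [halt (e 0)]
      simp [PiLp.smul_apply]
    · rcases Nat.lt_or_ge (i : ℕ) (n + 1) with hi2 | hi2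
      · have hieq : e i = e ⟨(i : ℕ), by omega⟩ := by congr 1
        have hb : br (e 0) (e ⟨(i : ℕ), by omega⟩) = e ⟨(i : ℕ) + 1, by omega⟩ :=
          hbr1 (i : ℕ) hi (by omega)
        rw [hieq, hb, he]
        have hne2 : ((⟨k + 1, by omega⟩ : Fin (n + 2)) : ℕ)
            ≠ ((⟨(i : ℕ) + 1, by omega⟩ : Fin (n + 2)) : ℕ) := by
          simp
          intro hkk
          apply hne
          apply Fin.ext
          simp; omega
        rw [PiLp.smul_apply, EuclideanSpace.single_apply]
        rw [if_neg (by intro hh; exact hne2 (by rw [hh]))]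
        simp
      · have : i = ⟨n + 1, Nat.lt_succ_self _⟩ := by apply Fin.ext; simp; omega
        rw [this, hbr2]
        simp [PiLp.smul_apply]

/-- A vector whose coordinates `0, …, n` vanish is a multiple of `e ⟨n+1⟩`,
and no such multiple can satisfy `J v = -e ⟨n+1⟩` for real `J` with `J (e ⟨n+1⟩) = v`. -/
lemma ex61_multiple (n : ℕ)
    (e : Fin (n + 2) → EuclideanSpace ℝ (Fin (n + 2)))
    (he : ∀ i, e i = EuclideanSpace.single i 1)
    (v : EuclideanSpace ℝ (Fin (n + 2)))
    (h0 : ∀ k : ℕ, ∀ hk : k < n + 2, k ≤ n → v ⟨k, hk⟩ = 0) :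
    v = v ⟨n + 1, Nat.lt_succ_self _⟩ • e ⟨n + 1, Nat.lt_succ_self _⟩ := by
  ext j
  rw [PiLp.smul_apply, he, EuclideanSpace.single_apply]
  by_cases hj : j = (⟨n + 1, Nat.lt_succ_self _⟩ : Fin (n + 2))
  · subst hj; simp
  · rw [if_neg hj]
    have hjn : (j : ℕ) ≤ n := by
      have h2 := j.isLt
      by_contra hc
      exact hj (Fin.ext (by simp; omega))
    have := h0 (j : ℕ) j.isLt hjn
    simpa using this

/-- For Example 6.1 of Gudmundsson–Svensson, no adapted almost complex structure is
integrable: if `J` is a linear isometry of `𝔤₁` with `J ∘ J = -id`, `J W = X₁` and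
`J 𝔳 ⊆ 𝔳` (where `𝔳 = span{X₂, …, X_{n+1}}`), then the Nijenhuis expression
`N_J(W, X_{n+1}) = [W,X_{n+1}] + J[JW,X_{n+1}] + J[W,JX_{n+1}] - [JW,JX_{n+1}]`
equals `J[W, JX_{n+1}]` and is nonzero. -/
theorem ex61_no_integrable_adapted_J (n : ℕ) (hn : 1 ≤ n)
    (e : Fin (n + 2) → EuclideanSpace ℝ (Fin (n + 2)))
    (he : ∀ i, e i = EuclideanSpace.single i 1)
    (br : EuclideanSpace ℝ (Fin (n + 2)) →ₗ[ℝ] EuclideanSpace ℝ (Fin (n + 2)) →ₗ[ℝ]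
      EuclideanSpace ℝ (Fin (n + 2)))
    (halt : ∀ x, br x x = 0)
    (hjac : ∀ x y z, br (br x y) z + br (br y z) x + br (br z x) y = 0)
    (hbr1 : ∀ (k : ℕ) (h1 : 1 ≤ k) (h2 : k ≤ n),
      br (e 0) (e ⟨k, by omega⟩) = e ⟨k + 1, by omega⟩)
    (hbr2 : br (e 0) (e ⟨n + 1, by omega⟩) = 0)
    (hbr3 : ∀ i j : Fin (n + 2), 1 ≤ (i : ℕ) → 1 ≤ (j : ℕ) → br (e i) (e j) = 0)
    (J : EuclideanSpace ℝ (Fin (n + 2)) →ₗᵢ[ℝ] EuclideanSpace ℝ (Fin (n + 2)))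
    (hJJ : ∀ x, J (J x) = -x)
    (hJW : J (e 0) = e 1)
    (hJv : ∀ v ∈ Submodule.span ℝ {x | ∃ i : Fin (n + 2), 2 ≤ (i : ℕ) ∧ x = e i},
      J v ∈ Submodule.span ℝ {x | ∃ i : Fin (n + 2), 2 ≤ (i : ℕ) ∧ x = e i}) :
    br (e 0) (e ⟨n + 1, by omega⟩)
      + J (br (J (e 0)) (e ⟨n + 1, by omega⟩))
      + J (br (e 0) (J (e ⟨n + 1, by omega⟩)))
      - br (J (e 0)) (J (e ⟨n + 1, by omega⟩))
        = J (br (e 0) (J (e ⟨n + 1, by omega⟩))) ∧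
    J (br (e 0) (J (e ⟨n + 1, by omega⟩))) ≠ 0 := by
  have hone : (1 : Fin (n + 2)) = ⟨1, by omega⟩ := by
    apply Fin.ext; simp [Fin.val_one]
  have hv_mem : J (e ⟨n + 1, by omega⟩) ∈
      Submodule.span ℝ {x | ∃ i : Fin (n + 2), 2 ≤ (i : ℕ) ∧ x = e i} := by
    apply hJv
    exact Submodule.subset_span ⟨⟨n + 1, by omega⟩, by simp; omega, rfl⟩
  have hker : ∀ w ∈ Submodule.span ℝ {x | ∃ i : Fin (n + 2), 2 ≤ (i : ℕ) ∧ x = e i},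
      br (e 1) w = 0 := by
    intro w hw
    have hle : Submodule.span ℝ {x | ∃ i : Fin (n + 2), 2 ≤ (i : ℕ) ∧ x = e i}
        ≤ LinearMap.ker (br (e 1)) := by
      apply Submodule.span_le.2
      rintro x ⟨i, hi2, rfl⟩
      exact LinearMap.mem_ker.2 (hbr3 1 i (by rw [hone]) (by omega))
    exact LinearMap.mem_ker.1 (hle hw)
  have h2 : br (J (e 0)) (e ⟨n + 1, by omega⟩) = 0 := by
    rw [hJW]; exact hbr3 1 ⟨n + 1, by omega⟩ (by rw [hone]) (by simp)
  have h4 : br (J (e 0)) (J (e ⟨n + 1, by omega⟩)) = 0 := by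
    rw [hJW]; exact hker _ hv_mem
  refine ⟨by rw [hbr2, h2, h4, map_zero]; abel, ?_⟩
  intro hcon
  have hbr0 : br (e 0) (J (e ⟨n + 1, by omega⟩)) = 0 := by
    apply J.injective
    rw [hcon, map_zero]
  set v : EuclideanSpace ℝ (Fin (n + 2)) := J (e ⟨n + 1, by omega⟩) with hv
  have hv_sum : v = ∑ i, v i • e i := by
    conv_lhs => rw [esum_repr v]
    simp_rw [he]
  have hbr0' : (∑ i, v i • br (e 0) (e i)) = 0 := by
    rw [← hbr0]
    conv_rhs => rw [hv_sum]
    rw [map_sum]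
    simp only [map_smul]
  -- coordinate 0 of v vanishes (from span membership)
  have hv0 : v 0 = 0 := by
    have hle : Submodule.span ℝ {x | ∃ i : Fin (n + 2), 2 ≤ (i : ℕ) ∧ x = e i} ≤
        LinearMap.ker ((EuclideanSpace.proj (0 : Fin (n + 2)) :
          EuclideanSpace ℝ (Fin (n + 2)) →L[ℝ] ℝ).toLinearMap) := by
      apply Submodule.span_le.2
      rintro x ⟨i, hi2, rfl⟩
      rw [SetLike.mem_coe, LinearMap.mem_ker]
      show e i 0 = 0
      rw [he, EuclideanSpace.single_apply, if_neg]
      intro hh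
      rw [← hh] at hi2
      simp at hi2
    exact LinearMap.mem_ker.1 (hle hv_mem)
  -- all coordinates 0..n of v vanish
  have hcoords : ∀ k : ℕ, ∀ hk : k < n + 2, k ≤ n → v ⟨k, hk⟩ = 0 := by
    intro k hk hkn
    rcases Nat.eq_zero_or_pos k with rfl | hk1
    · exact hv0
    · exact ex61_coord_vanish n e he br halt hbr1 hbr2 v hbr0' k hk hk1 hkn
  have hv_prop : v = v ⟨n + 1, by omega⟩ • e ⟨n + 1, by omega⟩ :=
    ex61_multiple n e he v hcoords
  -- contradiction with J ∘ J = -id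
  have hcontr : (v ⟨n + 1, by omega⟩) ^ 2 • e ⟨n + 1, by omega⟩ = -(e ⟨n + 1, by omega⟩) := by
    have hJ2 := hJJ (e ⟨n + 1, by omega⟩)
    rw [← hv] at hJ2
    calc (v ⟨n + 1, by omega⟩) ^ 2 • e ⟨n + 1, by omega⟩
        = v ⟨n + 1, by omega⟩ • (v ⟨n + 1, by omega⟩ • e ⟨n + 1, by omega⟩) := by
          rw [smul_smul]; ring_nf
      _ = v ⟨n + 1, by omega⟩ • v := by rw [← hv_prop]
      _ = J (v ⟨n + 1, by omega⟩ • e ⟨n + 1, by omega⟩) := by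
          rw [map_smul, ← hv]
      _ = J v := by rw [← hv_prop]
      _ = -(e ⟨n + 1, by omega⟩) := hJ2
  have hc2 : (v ⟨n + 1, by omega⟩) ^ 2 * 1 = -1 := by
    have h := econgr hcontr ⟨n + 1, by omega⟩
    rw [PiLp.smul_apply, PiLp.neg_apply, he, EuclideanSpace.single_apply, if_pos rfl] at h
    simpa using h
  nlinarith [sq_nonneg (v ⟨n + 1, by omega⟩)]
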